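/- Let k > 1 be real, a_0 = k, let a_j (j ≥ 1) be the Sylvester sequence of 1 − 1/k and b_ℓ the Sylvester sequence of 1, and set A_j = 20k³a_j² (with A_0 = 20k³) and B_ℓ = 20k³b_ℓ². Then ∑_{j=0}^∞ ∑_{ℓ=1}^∞ (k²/(a_j b_ℓ))(log(A_j + B_ℓ) + 1) ≤ k²(6 + log(20k³)) ≤ 10k³. -/

import Mathlib

/-- The Sylvester sequence of `α`: `sylv α n` is the `(n+1)`-st term `s_{n+1}(α)`,
the least integer strictly greater than the reciprocal of the remainder
`α - 1/s_1 - ⋯ - 1/s_n`. -/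
noncomputable def sylv (α : ℝ) : ℕ → ℤ
  | 0 => ⌊1/α⌋ + 1
  | n + 1 => ⌊(α - ∑ j ∈ (Finset.range (n+1)).attach, (1:ℝ)/(sylv α j.1))⁻¹⌋ + 1
decreasing_by exact Finset.mem_range.mp j.2

/-- The sequence `a_j` for `j ≥ 0`, with `a_0 = k` and `a_j` (for `j ≥ 1`) the Sylvester
sequence of `1 - 1/k`. -/
noncomputable def aSeq (k : ℝ) : ℕ → ℝ
  | 0 => k
  | j + 1 => (sylv (1 - 1/k) j : ℝ)

/-!
Each term is at most `k² / (a b)` times `log (20 k³) + 1 + log (1 + a²) + log (1 + b²)`, because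
`a² + b² ≤ (1 + a²) (1 + b²)`. As `∑ 1/a_j = 1/k + ∑ 1/s_j(1 - 1/k) ≤ 1` and `∑ 1/b_ℓ ≤ 1`, the
double sum is at most `k² (log (20 k³) + 1 + G(a) + G(b))`, where `G(s)` is the sum of the weights
`log (1 + s²) / s`. The weight decreases on `[2, ∞)` and at least halves along a Sylvester step
`c ↦ c (c - 1) + 1` once `c ≥ 5`, so along any sequence growing like Sylvester's its sum is at most
a few explicit terms plus twice the next one. This gives `G(b) ≤ 2.34`. For `G(a)`, splitting the
range of `k` into seven intervals pins down the first greedy terms of `1 - 1/k` and bounds the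
next one from below, which gives `G(a) ≤ 2.66`.
-/

open Real Finset

noncomputable def sylvRem (α : ℝ) (n : ℕ) : ℝ := α - ∑ j ∈ range n, 1 / (sylv α j : ℝ)

lemma sylvRem_succ (α : ℝ) (n : ℕ) :
    sylvRem α (n + 1) = sylvRem α n - 1 / (sylv α n : ℝ) := by
  rw [sylvRem, sylvRem, sum_range_succ]; ring

lemma sylv_eq_floor (α : ℝ) (n : ℕ) : sylv α n = ⌊(sylvRem α n)⁻¹⌋ + 1 := by
  cases n with
  | zero => simp [sylv, sylvRem]
  | succ n => rw [sylv, sylvRem, sum_attach (range (n + 1)) fun j => (1 : ℝ) / sylv α j]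

lemma inv_sylvRem_lt_sylv (α : ℝ) (n : ℕ) : (sylvRem α n)⁻¹ < sylv α n := by
  rw [sylv_eq_floor]; push_cast; exact Int.lt_floor_add_one _

lemma sylv_sub_one_le_inv_sylvRem (α : ℝ) (n : ℕ) : (sylv α n : ℝ) - 1 ≤ (sylvRem α n)⁻¹ := by
  rw [sylv_eq_floor]; push_cast; linarith [Int.floor_le (sylvRem α n)⁻¹]

section Remainder

variable {α : ℝ}

lemma sylvRem_pos (hα : 0 < α) (n : ℕ) : 0 < sylvRem α n := by
  induction n with
  | zero => simpa [sylvRem] using hα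
  | succ n ih =>
    have h := inv_sylvRem_lt_sylv α n
    have hs : 0 < (sylv α n : ℝ) := (inv_pos.2 ih).trans h
    rw [sylvRem_succ, sub_pos, div_lt_iff₀ hs]
    exact (inv_lt_iff_one_lt_mul₀' ih).1 h

lemma sylv_pos (hα : 0 < α) (n : ℕ) : (0 : ℝ) < sylv α n :=
  (inv_pos.2 (sylvRem_pos hα n)).trans (inv_sylvRem_lt_sylv α n)

lemma sum_inv_sylv_le (hα : 0 < α) (n : ℕ) : ∑ j ∈ range n, 1 / (sylv α j : ℝ) ≤ α := by
  have := sylvRem_pos hα n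
  rw [sylvRem] at this
  linarith

lemma sylvRem_le (hα : 0 < α) (n : ℕ) : sylvRem α n ≤ α :=
  sub_le_self _ (sum_nonneg fun j _ => (one_div_pos.2 (sylv_pos hα j)).le)

lemma le_sylv_of_mul_sylvRem_le {c : ℤ} {n : ℕ} (hα : 0 < α) (h : (c - 1) * sylvRem α n ≤ 1) :
    c ≤ sylv α n := by
  have hR := sylvRem_pos hα n
  have : c - 1 ≤ ⌊(sylvRem α n)⁻¹⌋ := by
    rw [Int.le_floor, ← one_div, le_div_iff₀ hR]; push_cast; exact h
  rw [sylv_eq_floor]; omega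

lemma two_le_sylv (hα : 0 < α) (hα1 : α ≤ 1) (n : ℕ) : 2 ≤ sylv α n :=
  le_sylv_of_mul_sylvRem_le hα (by norm_num; exact (sylvRem_le hα n).trans hα1)

lemma sylv_growth (hα : 0 < α) (hα1 : α ≤ 1) (n : ℕ) :
    sylv α n * (sylv α n - 1) + 1 ≤ sylv α (n + 1) := by
  apply le_sylv_of_mul_sylvRem_le hα
  have hs : (2 : ℝ) ≤ sylv α n := by exact_mod_cast two_le_sylv hα hα1 n
  have hR : (sylv α n - 1) * sylvRem α n ≤ 1 := by
    have := sylv_sub_one_le_inv_sylvRem α n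
    rwa [← one_div, le_div_iff₀ (sylvRem_pos hα n)] at this
  have key : ((sylv α n : ℝ) * (sylv α n - 1) + 1 - 1) * sylvRem α (n + 1)
      = sylv α n * ((sylv α n - 1) * sylvRem α n) - (sylv α n - 1) := by
    rw [sylvRem_succ]; field_simp; ring
  push_cast
  rw [key]
  nlinarith

lemma sylv_zero_eq {c : ℤ} (hα : 0 < α) (h1 : 1 < c * α) (h2 : (c - 1) * α ≤ 1) :
    sylv α 0 = c := by
  have h : ⌊α⁻¹⌋ = c - 1 := by
    rw [Int.floor_eq_iff, ← one_div, le_div_iff₀ hα, div_lt_iff₀ hα]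
    push_cast; constructor <;> linarith
  rw [sylv_eq_floor, show sylvRem α 0 = α by simp [sylvRem], h]; ring

end Remainder

lemma sylv_succ (α : ℝ) (n : ℕ) : sylv α (n + 1) = sylv (α - 1 / sylv α 0) n := by
  induction n using Nat.strong_induction_on with
  | _ n ih =>
    have hR : sylvRem α (n + 1) = sylvRem (α - 1 / sylv α 0) n := by
      rw [sylvRem, sylvRem, sum_range_succ',
        sum_congr rfl fun j hj => by rw [ih j (mem_range.1 hj)]]
      ring
    rw [sylv_eq_floor, sylv_eq_floor, hR]

lemma log_le_of_pow_le_two_pow {x : ℝ} {p q : ℕ} (hx : 0 < x) (hq : 0 < q)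
    (h : x ^ q ≤ 2 ^ p) : log x ≤ p / q * log 2 := by
  have := log_le_log (pow_pos hx q) h
  rw [log_pow, log_pow] at this
  rw [div_mul_eq_mul_div, le_div_iff₀ (by exact_mod_cast hq)]
  linarith

lemma eight_fifths_lt_log_five : 8 / 5 < log 5 := by
  have := log_le_log (by norm_num) (show (2 : ℝ) ^ 37 ≤ 5 ^ 16 by norm_num)
  rw [log_pow, log_pow] at this
  push_cast at this
  linarith [log_two_gt_d9]

noncomputable def logWeight (x : ℝ) : ℝ := log (1 + x ^ 2) / x

lemma logWeight_nonneg {x : ℝ} (hx : 0 ≤ x) : 0 ≤ logWeight x :=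
  div_nonneg (log_nonneg (by nlinarith)) hx

lemma logWeight_le_of_pow_le (c : ℝ) (p q : ℕ) (h : (1 + c ^ 2) ^ q ≤ 2 ^ p)
    (hc : 0 < c := by norm_num) (hq : 0 < q := by norm_num) : logWeight c ≤ p / q * log 2 / c :=
  div_le_div_of_nonneg_right (log_le_of_pow_le_two_pow (by positivity) hq h) hc.le

lemma logWeight_le_of_le_two {x : ℝ} (h1 : 1 ≤ x) (h2 : x ≤ 2) :
    logWeight x ≤ log 5 - 3 / 5 := by
  -- tangent line of `log` at `5`
  have ht : log (1 + x ^ 2) ≤ log 5 + (x ^ 2 - 4) / 5 := by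
    have := log_le_sub_one_of_pos (show 0 < (1 + x ^ 2) / 5 by positivity)
    rw [log_div (by positivity) (by norm_num)] at this
    linarith
  rw [logWeight, div_le_iff₀ (by linarith)]
  nlinarith [eight_fifths_lt_log_five]

lemma hasDerivAt_logWeight {x : ℝ} (hx : x ≠ 0) :
    HasDerivAt logWeight ((2 * x / (1 + x ^ 2) * x - log (1 + x ^ 2)) / x ^ 2) x := by
  have h : HasDerivAt (fun x : ℝ => 1 + x ^ 2) (2 * x) x := by
    simpa using (hasDerivAt_pow 2 x).const_add 1
  have := (h.log (by positivity)).div (hasDerivAt_id x) hx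
  simp only [id, mul_one] at this
  exact this

lemma antitoneOn_logWeight : AntitoneOn logWeight (Set.Ici 2) := by
  apply antitoneOn_of_deriv_nonpos (convex_Ici 2)
  · exact fun x (hx : 2 ≤ x) =>
      (hasDerivAt_logWeight (zero_lt_two.trans_le hx).ne').continuousAt.continuousWithinAt
  · rw [interior_Ici]
    exact fun x (hx : 2 < x) =>
      (hasDerivAt_logWeight (zero_lt_two.trans hx).ne').differentiableAt.differentiableWithinAt
  rw [interior_Ici]
  intro x (hx : 2 < x)
  rw [(hasDerivAt_logWeight (zero_lt_two.trans hx).ne').deriv]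
  apply div_nonpos_of_nonpos_of_nonneg _ (by positivity)
  -- `log y ≥ log 5 + 1 - 5 / y ≥ 2 - 2 / y` for `y = 1 + x ^ 2 ≥ 5`
  have hy : 5 ≤ 1 + x ^ 2 := by nlinarith
  have h1 := one_sub_inv_le_log_of_pos (show 0 < (1 + x ^ 2) / 5 by positivity)
  rw [log_div (by positivity) (by norm_num), inv_div] at h1
  have h2 : 2 * x / (1 + x ^ 2) * x = 2 - 2 / (1 + x ^ 2) := by field_simp; ring
  have h3 : 3 / (1 + x ^ 2) ≤ 3 / 5 := div_le_div_of_nonneg_left (by norm_num) (by norm_num) hy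
  have h4 : 5 / (1 + x ^ 2) = 2 / (1 + x ^ 2) + 3 / (1 + x ^ 2) := by ring
  linarith [eight_fifths_lt_log_five]

lemma logWeight_le_of_le {c x : ℝ} (hc : 2 ≤ c) (hx : c ≤ x) : logWeight x ≤ logWeight c :=
  antitoneOn_logWeight (Set.mem_Ici.2 hc) (Set.mem_Ici.2 (hc.trans hx)) hx

lemma two_mul_logWeight_le {x : ℝ} (hx : 5 ≤ x) :
    2 * logWeight (x * (x - 1) + 1) ≤ logWeight x := by
  have hy : 0 < x * (x - 1) + 1 := by nlinarith
  have hlog : log (1 + (x * (x - 1) + 1) ^ 2) ≤ 2 * log (1 + x ^ 2) := by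
    have := log_le_log (by positivity)
      (show 1 + (x * (x - 1) + 1) ^ 2 ≤ (1 + x ^ 2) ^ 2 by nlinarith)
    rwa [log_pow, Nat.cast_ofNat] at this
  have h0 : 0 ≤ log (1 + x ^ 2) := log_nonneg (by nlinarith)
  rw [logWeight, logWeight, ← mul_div_assoc, div_le_div_iff₀ hy (by linarith)]
  nlinarith [mul_le_mul_of_nonneg_right hlog (by linarith : (0 : ℝ) ≤ x),
    mul_nonneg h0 (show 0 ≤ x * (x - 1) + 1 - 4 * x by nlinarith)]

def LogWeightSumLE (s : ℕ → ℝ) (B : ℝ) : Prop := ∀ m, ∑ n ∈ range m, logWeight (s n) ≤ B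

lemma LogWeightSumLE.mono {s : ℕ → ℝ} {B B' : ℝ} (h : LogWeightSumLE s B) (hB : B ≤ B') :
    LogWeightSumLE s B' :=
  fun m => (h m).trans hB

lemma LogWeightSumLE.cons {s : ℕ → ℝ} {B : ℝ} (hs : 0 ≤ s 0)
    (h : LogWeightSumLE (fun n => s (n + 1)) B) : LogWeightSumLE s (logWeight (s 0) + B) := by
  rintro (_ | m)
  · simpa using add_nonneg (logWeight_nonneg hs) (by simpa using h 0)
  · rw [sum_range_succ', add_comm]
    exact add_le_add_right (h m) _

def SylvesterGrowth (s : ℕ → ℝ) : Prop := ∀ n, s n * (s n - 1) + 1 ≤ s (n + 1)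

def ChainBound (c B : ℝ) : Prop := ∀ s, c ≤ s 0 → SylvesterGrowth s → LogWeightSumLE s B

lemma ChainBound.cons {c d B : ℝ} (h : ChainBound d B) (hc : 2 ≤ c := by norm_num)
    (hd : d ≤ c * (c - 1) + 1 := by norm_num) : ChainBound c (logWeight c + B) := by
  intro s hs0 hs
  have h1 : d ≤ s 1 := hd.trans (by nlinarith [hs 0])
  refine (LogWeightSumLE.cons (by linarith) (h _ h1 fun n => hs (n + 1))).mono ?_
  gcongr
  exact logWeight_le_of_le hc hs0

lemma ChainBound.of_five_le {c : ℝ} (hc : 5 ≤ c := by norm_num) :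
    ChainBound c (2 * logWeight c) := by
  suffices key : ∀ m (s : ℕ → ℝ), 5 ≤ s 0 → SylvesterGrowth s →
      ∑ n ∈ range m, logWeight (s n) ≤ 2 * logWeight (s 0) by
    intro s hs0 hs m
    exact (key m s (hc.trans hs0) hs).trans (by gcongr; exact logWeight_le_of_le (by linarith) hs0)
  intro m
  induction m with
  | zero => intro s hs0 _; simpa using logWeight_nonneg (by linarith)
  | succ m ih =>
    intro s hs0 hs
    have h1 : s 0 * (s 0 - 1) + 1 ≤ s 1 := hs 0
    have h2 : 2 ≤ s 0 * (s 0 - 1) + 1 := by nlinarith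
    rw [sum_range_succ']
    have := ih (fun n => s (n + 1)) (by nlinarith) fun n => hs (n + 1)
    linarith [logWeight_le_of_le h2 h1, two_mul_logWeight_le hs0]

lemma LogWeightSumLE.sylv_cons {α B : ℝ} {c : ℤ} (hα : 0 < α) (h1 : 1 < c * α)
    (h2 : (c - 1) * α ≤ 1) (h : LogWeightSumLE (fun n => (sylv (α - 1 / c) n : ℝ)) B) :
    LogWeightSumLE (fun n => (sylv α n : ℝ)) (logWeight c + B) := by
  have hc := sylv_zero_eq hα h1 h2
  have hc0 : (0 : ℝ) ≤ c := by nlinarith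
  simpa only [sylv_succ α, hc] using LogWeightSumLE.cons (s := fun n => (sylv α n : ℝ))
    (by simpa [hc] using hc0) (by simpa only [sylv_succ α, hc] using h)

lemma LogWeightSumLE.sylv_of_chainBound {α B : ℝ} {c : ℤ} (hα : 0 < α) (hα1 : α ≤ 1)
    (h : (c - 1) * α ≤ 1) (hB : ChainBound c B) : LogWeightSumLE (fun n => (sylv α n : ℝ)) B := by
  refine hB _ (by exact_mod_cast le_sylv_of_mul_sylvRem_le hα (by simpa [sylvRem] using h)) ?_
  intro n
  dsimp only
  exact_mod_cast sylv_growth hα hα1 n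

lemma logWeightSumLE_sylv_one : LogWeightSumLE (fun n => (sylv 1 n : ℝ)) 2.34 := by
  refine (LogWeightSumLE.sylv_of_chainBound (c := 2) one_pos le_rfl (by norm_num) <|
    .cons (d := 3) <| .cons (d := 7) <| .cons (d := 43) <| .cons (d := 1807) <| .of_five_le).mono ?_
  push_cast
  linarith [log_two_lt_d9, logWeight_le_of_pow_le 2 7 3 (by norm_num),
    logWeight_le_of_pow_le 3 10 3 (by norm_num), logWeight_le_of_pow_le 7 17 3 (by norm_num),
    logWeight_le_of_pow_le 43 11 1 (by norm_num), logWeight_le_of_pow_le 1807 65 3 (by norm_num)]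

lemma LogWeightSumLE.aSeq {k B : ℝ} (hk : 0 ≤ k)
    (h : LogWeightSumLE (fun n => (sylv (1 - 1 / k) n : ℝ)) B) :
    LogWeightSumLE (aSeq k) (logWeight k + B) :=
  LogWeightSumLE.cons hk h

lemma one_div_bounds_of_mem_Ioc {a b k : ℝ} (ha : 0 < a) (hk : k ∈ Set.Ioc a b) :
    1 / b ≤ 1 / k ∧ 1 / k < 1 / a :=
  ⟨one_div_le_one_div_of_le (ha.trans hk.1) hk.2, one_div_lt_one_div_of_lt ha hk.1⟩

section Leaves

-- On each range of `k` the side conditions of the greedy steps are linear in `1 / k`.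

variable {k : ℝ}

lemma logWeightSumLE_aSeq_of_mem_Ioc_one_two (hk : k ∈ Set.Ioc 1 2) :
    LogWeightSumLE (aSeq k) 2.66 := by
  have hu := one_div_bounds_of_mem_Ioc one_pos hk
  refine (LogWeightSumLE.aSeq ?_ <| .sylv_of_chainBound (c := 3) ?_ ?_ ?_ <| .cons (d := 7) <|
    .cons (d := 43) <| .cons (d := 1807) <| .of_five_le).mono ?_
  on_goal -1 =>
    push_cast
    linarith [logWeight_le_of_le_two hk.1.le hk.2,
      log_le_of_pow_le_two_pow (x := 5) (p := 7) (q := 3) (by norm_num) (by norm_num) (by norm_num),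
      logWeight_le_of_pow_le 3 10 3 (by norm_num), logWeight_le_of_pow_le 7 17 3 (by norm_num),
      logWeight_le_of_pow_le 43 11 1 (by norm_num), logWeight_le_of_pow_le 1807 65 3 (by norm_num),
      log_two_lt_d9]
  all_goals push_cast; linarith [hk.1]

lemma logWeightSumLE_aSeq_of_mem_Ioc_two_four (hk : k ∈ Set.Ioc 2 4) :
    LogWeightSumLE (aSeq k) 2.66 := by
  have hu := one_div_bounds_of_mem_Ioc two_pos hk
  refine (LogWeightSumLE.aSeq ?_ <| .sylv_cons (c := 2) ?_ ?_ ?_ <|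
    .sylv_of_chainBound (c := 5) ?_ ?_ ?_ <| .cons (d := 21) <| .cons (d := 421) <|
    .of_five_le).mono ?_
  on_goal -1 =>
    push_cast
    linarith [logWeight_le_of_le le_rfl hk.1.le, logWeight_le_of_pow_le 2 7 3 (by norm_num),
      logWeight_le_of_pow_le 5 19 4 (by norm_num), logWeight_le_of_pow_le 21 44 5 (by norm_num),
      logWeight_le_of_pow_le 421 35 2 (by norm_num), log_two_lt_d9]
  all_goals push_cast; linarith [hk.1]

lemma logWeightSumLE_aSeq_of_mem_Ioc_four_five (hk : k ∈ Set.Ioc 4 5) :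
    LogWeightSumLE (aSeq k) 2.66 := by
  have hu := one_div_bounds_of_mem_Ioc four_pos hk
  refine (LogWeightSumLE.aSeq ?_ <| .sylv_cons (c := 2) ?_ ?_ ?_ <| .sylv_cons (c := 4) ?_ ?_ ?_ <|
    .sylv_of_chainBound (c := 21) ?_ ?_ ?_ <| .cons (d := 421) <| .of_five_le).mono ?_
  on_goal -1 =>
    push_cast
    linarith [logWeight_le_of_le (by norm_num) hk.1.le, logWeight_le_of_pow_le 2 7 3 (by norm_num),
      logWeight_le_of_pow_le 4 25 6 (by norm_num), logWeight_le_of_pow_le 21 44 5 (by norm_num),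
      logWeight_le_of_pow_le 421 35 2 (by norm_num), log_two_lt_d9]
  all_goals push_cast; linarith [hk.1]

lemma logWeightSumLE_aSeq_of_mem_Ioc_five_six (hk : k ∈ Set.Ioc 5 6) :
    LogWeightSumLE (aSeq k) 2.66 := by
  have hu := one_div_bounds_of_mem_Ioc (by norm_num) hk
  refine (LogWeightSumLE.aSeq ?_ <| .sylv_cons (c := 2) ?_ ?_ ?_ <| .sylv_cons (c := 4) ?_ ?_ ?_ <|
    .sylv_of_chainBound (c := 13) ?_ ?_ ?_ <| .cons (d := 157) <| .cons (d := 24493) <|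
    .of_five_le).mono ?_
  on_goal -1 =>
    push_cast
    linarith [logWeight_le_of_le (by norm_num) hk.1.le, logWeight_le_of_pow_le 2 7 3 (by norm_num),
      logWeight_le_of_pow_le 4 25 6 (by norm_num), logWeight_le_of_pow_le 5 19 4 (by norm_num),
      logWeight_le_of_pow_le 13 15 2 (by norm_num), logWeight_le_of_pow_le 157 73 5 (by norm_num),
      logWeight_le_of_pow_le 24493 175 6 (by norm_num), log_two_lt_d9]
  all_goals push_cast; linarith [hk.1]

lemma logWeightSumLE_aSeq_of_mem_Ioc_six_twelve (hk : k ∈ Set.Ioc 6 12) :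
    LogWeightSumLE (aSeq k) 2.66 := by
  have hu := one_div_bounds_of_mem_Ioc (by norm_num) hk
  refine (LogWeightSumLE.aSeq ?_ <| .sylv_cons (c := 2) ?_ ?_ ?_ <| .sylv_cons (c := 3) ?_ ?_ ?_ <|
    .sylv_of_chainBound (c := 13) ?_ ?_ ?_ <| .cons (d := 157) <| .cons (d := 24493) <|
    .of_five_le).mono ?_
  on_goal -1 =>
    push_cast
    linarith [logWeight_le_of_le (by norm_num) hk.1.le, logWeight_le_of_pow_le 2 7 3 (by norm_num),
      logWeight_le_of_pow_le 3 10 3 (by norm_num), logWeight_le_of_pow_le 6 21 4 (by norm_num),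
      logWeight_le_of_pow_le 13 15 2 (by norm_num), logWeight_le_of_pow_le 157 73 5 (by norm_num),
      logWeight_le_of_pow_le 24493 175 6 (by norm_num), log_two_lt_d9]
  all_goals push_cast; linarith [hk.1]

lemma logWeightSumLE_aSeq_of_mem_Ioc_twelve_twentyFour (hk : k ∈ Set.Ioc 12 24) :
    LogWeightSumLE (aSeq k) 2.66 := by
  have hu := one_div_bounds_of_mem_Ioc (by norm_num) hk
  refine (LogWeightSumLE.aSeq ?_ <| .sylv_cons (c := 2) ?_ ?_ ?_ <| .sylv_cons (c := 3) ?_ ?_ ?_ <|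
    .sylv_of_chainBound (c := 9) ?_ ?_ ?_ <| .cons (d := 73) <| .cons (d := 5257) <|
    .of_five_le).mono ?_
  on_goal -1 =>
    push_cast
    linarith [logWeight_le_of_le (by norm_num) hk.1.le, logWeight_le_of_pow_le 2 7 3 (by norm_num),
      logWeight_le_of_pow_le 3 10 3 (by norm_num), logWeight_le_of_pow_le 12 36 5 (by norm_num),
      logWeight_le_of_pow_le 9 32 5 (by norm_num), logWeight_le_of_pow_le 73 62 5 (by norm_num),
      logWeight_le_of_pow_le 5257 99 4 (by norm_num), log_two_lt_d9]
  all_goals push_cast; linarith [hk.1]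

lemma logWeightSumLE_aSeq_of_twentyFour_lt (hk : 24 < k) : LogWeightSumLE (aSeq k) 2.66 := by
  have hu : 0 < 1 / k ∧ 1 / k < 1 / 24 :=
    ⟨by positivity, one_div_lt_one_div_of_lt (by norm_num) hk⟩
  refine (LogWeightSumLE.aSeq ?_ <| .sylv_cons (c := 2) ?_ ?_ ?_ <| .sylv_cons (c := 3) ?_ ?_ ?_ <|
    .sylv_of_chainBound (c := 7) ?_ ?_ ?_ <| .cons (d := 43) <| .cons (d := 1807) <|
    .of_five_le).mono ?_
  on_goal -1 =>
    push_cast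
    linarith [logWeight_le_of_le (by norm_num) hk.le, logWeight_le_of_pow_le 2 7 3 (by norm_num),
      logWeight_le_of_pow_le 3 10 3 (by norm_num), logWeight_le_of_pow_le 24 46 5 (by norm_num),
      logWeight_le_of_pow_le 7 17 3 (by norm_num), logWeight_le_of_pow_le 43 11 1 (by norm_num),
      logWeight_le_of_pow_le 1807 65 3 (by norm_num), log_two_lt_d9]
  all_goals push_cast; linarith [hk]

end Leaves

lemma logWeightSumLE_aSeq {k : ℝ} (hk : 1 < k) : LogWeightSumLE (aSeq k) 2.66 := by
  rcases le_or_gt k 2 with h2 | h2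
  · exact logWeightSumLE_aSeq_of_mem_Ioc_one_two ⟨hk, h2⟩
  rcases le_or_gt k 4 with h4 | h4
  · exact logWeightSumLE_aSeq_of_mem_Ioc_two_four ⟨h2, h4⟩
  rcases le_or_gt k 5 with h5 | h5
  · exact logWeightSumLE_aSeq_of_mem_Ioc_four_five ⟨h4, h5⟩
  rcases le_or_gt k 6 with h6 | h6
  · exact logWeightSumLE_aSeq_of_mem_Ioc_five_six ⟨h5, h6⟩
  rcases le_or_gt k 12 with h12 | h12
  · exact logWeightSumLE_aSeq_of_mem_Ioc_six_twelve ⟨h6, h12⟩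
  rcases le_or_gt k 24 with h24 | h24
  · exact logWeightSumLE_aSeq_of_mem_Ioc_twelve_twentyFour ⟨h12, h24⟩
  · exact logWeightSumLE_aSeq_of_twentyFour_lt h24

lemma one_sub_one_div_pos {k : ℝ} (hk : 1 < k) : 0 < 1 - 1 / k :=
  sub_pos.2 ((div_lt_one (by linarith)).2 hk)

lemma one_le_aSeq {k : ℝ} (hk : 1 < k) : ∀ j, 1 ≤ aSeq k j
  | 0 => hk.le
  | j + 1 => by
    have := two_le_sylv (one_sub_one_div_pos hk) (sub_le_self 1 (by positivity)) j
    change (1 : ℝ) ≤ (sylv (1 - 1 / k) j : ℝ)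
    exact_mod_cast this.trans' (by norm_num)

lemma sum_inv_aSeq_le {k : ℝ} (hk : 1 < k) (N : ℕ) : ∑ j ∈ range N, 1 / aSeq k j ≤ 1 := by
  cases N with
  | zero => simp
  | succ N =>
    have := sum_inv_sylv_le (one_sub_one_div_pos hk) N
    rw [sum_range_succ']
    change ∑ j ∈ range N, 1 / (sylv (1 - 1 / k) j : ℝ) + 1 / k ≤ 1
    linarith

lemma log_mul_add_mul_le {C a b : ℝ} (hC : 0 < C) (ha : a ≠ 0) :
    log (C * a ^ 2 + C * b ^ 2) ≤ log C + log (1 + a ^ 2) + log (1 + b ^ 2) := by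
  have h : log (a ^ 2 + b ^ 2) ≤ log ((1 + a ^ 2) * (1 + b ^ 2)) :=
    log_le_log (by positivity) (by nlinarith [mul_nonneg (sq_nonneg a) (sq_nonneg b)])
  rw [log_mul (by positivity) (by positivity)] at h
  rw [← mul_add, log_mul hC.ne' (by positivity)]
  linarith

lemma div_mul_log_add_le {K C a b : ℝ} (hK : 0 ≤ K) (hC : 0 < C) (ha : 0 < a) (hb : 0 < b) :
    K / (a * b) * (log (C * a ^ 2 + C * b ^ 2) + 1) ≤
      K * ((log C + 1) * (1 / a * (1 / b)) + logWeight a * (1 / b) + 1 / a * logWeight b) := by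
  calc K / (a * b) * (log (C * a ^ 2 + C * b ^ 2) + 1)
      ≤ K / (a * b) * (log C + log (1 + a ^ 2) + log (1 + b ^ 2) + 1) := by
        gcongr; exact log_mul_add_mul_le hC ha.ne'
    _ = _ := by rw [logWeight, logWeight]; field_simp; ring

lemma sum_sum_le_add_add {ι κ : Type*} {s : Finset ι} {t : Finset κ} {x g : ι → ℝ}
    {y h : κ → ℝ} {X G H : ℝ} (hX : 0 ≤ X) (hx : ∀ i, 0 ≤ x i) (hy : ∀ j, 0 ≤ y j)
    (hg : ∀ i, 0 ≤ g i) (hh : ∀ j, 0 ≤ h j) (hsx : ∑ i ∈ s, x i ≤ 1) (hsy : ∑ j ∈ t, y j ≤ 1)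
    (hsg : ∑ i ∈ s, g i ≤ G) (hsh : ∑ j ∈ t, h j ≤ H) :
    ∑ i ∈ s, ∑ j ∈ t, (X * (x i * y j) + g i * y j + x i * h j) ≤ X + G + H := by
  have e : ∑ i ∈ s, ∑ j ∈ t, (X * (x i * y j) + g i * y j + x i * h j) =
      X * ((∑ i ∈ s, x i) * ∑ j ∈ t, y j) + (∑ i ∈ s, g i) * (∑ j ∈ t, y j) +
        (∑ i ∈ s, x i) * ∑ j ∈ t, h j := by
    rw [sum_mul_sum, sum_mul_sum, sum_mul_sum, mul_sum]
    simp only [mul_sum, sum_add_distrib]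
  have := sum_nonneg fun i (_ : i ∈ s) => hx i
  have := sum_nonneg fun j (_ : j ∈ t) => hy j
  have := sum_nonneg fun i (_ : i ∈ s) => hg i
  have := sum_nonneg fun j (_ : j ∈ t) => hh j
  rw [e]
  gcongr ?_ + ?_ + ?_
  · exact mul_le_of_le_one_right hX (mul_le_one₀ hsx (by assumption) hsy)
  · exact (mul_le_of_le_one_right (by assumption) hsy).trans hsg
  · exact (mul_le_of_le_one_left (by assumption) hsx).trans hsh

lemma sum_range_sum_range_le {k : ℝ} (hk : 1 < k) (N : ℕ) :
    ∑ j ∈ range N, ∑ ℓ ∈ range N, k ^ 2 / (aSeq k j * (sylv 1 ℓ : ℝ)) *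
      (log (20 * k ^ 3 * aSeq k j ^ 2 + 20 * k ^ 3 * (sylv 1 ℓ : ℝ) ^ 2) + 1)
      ≤ k ^ 2 * (6 + log (20 * k ^ 3)) := by
  have ha := one_le_aSeq hk
  have hb : ∀ ℓ, (2 : ℝ) ≤ sylv 1 ℓ := fun ℓ => by exact_mod_cast two_le_sylv one_pos le_rfl ℓ
  have hX : 0 ≤ log (20 * k ^ 3) + 1 :=
    add_nonneg (log_nonneg (by nlinarith [one_le_pow₀ (n := 3) hk.le])) zero_le_one
  calc _ ≤ ∑ j ∈ range N, ∑ ℓ ∈ range N, k ^ 2 *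
          ((log (20 * k ^ 3) + 1) * (1 / aSeq k j * (1 / (sylv 1 ℓ : ℝ))) +
            logWeight (aSeq k j) * (1 / (sylv 1 ℓ : ℝ)) +
            1 / aSeq k j * logWeight (sylv 1 ℓ)) := by
        refine sum_le_sum fun j _ => sum_le_sum fun ℓ _ => ?_
        refine div_mul_log_add_le (by positivity) (by positivity) ?_ ?_
        · linarith [ha j]
        · linarith [hb ℓ]
    _ ≤ k ^ 2 * (log (20 * k ^ 3) + 1 + 2.66 + 2.34) := by
        simp only [← mul_sum]
        gcongr
        exact sum_sum_le_add_add hX (fun j => by have := ha j; positivity)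
          (fun ℓ => by have := hb ℓ; positivity) (fun j => logWeight_nonneg (by linarith [ha j]))
          (fun ℓ => logWeight_nonneg (by linarith [hb ℓ])) (sum_inv_aSeq_le hk N)
          (sum_inv_sylv_le one_pos N) (logWeightSumLE_aSeq hk N) (logWeightSumLE_sylv_one N)
    _ = k ^ 2 * (6 + log (20 * k ^ 3)) := by ring

lemma tsum_le_of_sum_range_product_le {f : ℕ × ℕ → ℝ} {C : ℝ} (hf : ∀ p, 0 ≤ f p)
    (h : ∀ N, ∑ p ∈ range N ×ˢ range N, f p ≤ C) : ∑' p, f p ≤ C := by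
  refine tsum_le_of_sum_le' (by simpa using h 0) fun s => ?_
  obtain ⟨N, hN⟩ := (s.image Prod.fst ∪ s.image Prod.snd).exists_nat_subset_range
  refine (sum_le_sum_of_subset_of_nonneg (fun p hp => ?_) fun p _ _ => hf p).trans (h N)
  exact mem_product.2 ⟨hN (mem_union_left _ (mem_image_of_mem _ hp)),
    hN (mem_union_right _ (mem_image_of_mem _ hp))⟩

lemma sq_mul_six_add_log_le {k : ℝ} (hk : 1 < k) :
    k ^ 2 * (6 + log (20 * k ^ 3)) ≤ 10 * k ^ 3 := by
  have hk0 : 0 < k := by linarith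
  have h20 : log 20 ≤ 5 * log 2 := by
    simpa using log_le_of_pow_le_two_pow (x := 20) (p := 5) (q := 1) (by norm_num) one_pos
      (by norm_num)
  have hlog : log (20 * k ^ 3) = log 20 + 3 * log k := by
    rw [log_mul (by norm_num) (by positivity), log_pow]; norm_num
  have : 6 + log (20 * k ^ 3) ≤ 10 * k := by
    rw [hlog]; linarith [log_le_sub_one_of_pos hk0, log_two_lt_d9]
  calc k ^ 2 * (6 + log (20 * k ^ 3)) ≤ k ^ 2 * (10 * k) := by gcongr
    _ = 10 * k ^ 3 := by ring

theorem double_sum_bound (k : ℝ) (hk : 1 < k) :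
    ∑' jl : ℕ × ℕ,
        (k^2 / (aSeq k jl.1 * (sylv 1 jl.2 : ℝ))) *
          (Real.log (20 * k^3 * (aSeq k jl.1)^2 + 20 * k^3 * ((sylv 1 jl.2 : ℝ))^2) + 1)
      ≤ k^2 * (6 + Real.log (20 * k^3)) ∧
    k^2 * (6 + Real.log (20 * k^3)) ≤ 10 * k^3 := by
  refine ⟨tsum_le_of_sum_range_product_le (fun p => ?_) fun N => ?_, sq_mul_six_add_log_le hk⟩
  · have := one_le_aSeq hk p.1
    have : (2 : ℝ) ≤ sylv 1 p.2 := by exact_mod_cast two_le_sylv one_pos le_rfl p.2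
    have : 1 ≤ k ^ 3 := one_le_pow₀ hk.le
    have : 0 ≤ log (20 * k ^ 3 * aSeq k p.1 ^ 2 + 20 * k ^ 3 * (sylv 1 p.2 : ℝ) ^ 2) :=
      log_nonneg (by nlinarith)
    positivity
  · rw [sum_product]
    exact sum_range_sum_range_le hk N
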